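/- arXiv:2602.08352 — 5 statements merged into one kernel-verified Lean document; each statement's English description precedes it below -/
import Mathlib

section
/- The double series-integral identity ∑_{k=2}^{∞} ∫_{0}^{∞} sinh³(y/2)/(sinh(ky/2) · sinh((k+1)y/2)) dy = ln 2 − 1/2 holds. -/
/-!
For `y > 0` the integrands telescope,
`sinh (y/2) / (sinh (k y/2) sinh ((k+1) y/2)) = coth (k y/2) - coth ((k+1) y/2)`,
so their series sums pointwise to `sinh² (y/2) (coth y - 1) = e⁻ʸ (1 - e⁻ʸ) / (2 (1 + e⁻ʸ))`.
The terms are nonnegative, so summation and integration commute, and the limit function has the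
antiderivative `e⁻ʸ/2 - log (1 + e⁻ʸ)`, which increases from `1/2 - log 2` at `0` to `0` at `∞`.
-/

open MeasureTheory Real Filter Topology Set

theorem MeasureTheory.hasSum_integral_of_nonneg {α ι : Type*} [MeasurableSpace α] {μ : Measure α}
    [Countable ι] {f : ι → α → ℝ} {g : α → ℝ} (hf : ∀ i, AEMeasurable (f i) μ)
    (hf_nonneg : ∀ i, 0 ≤ᵐ[μ] f i) (hfg : ∀ᵐ a ∂μ, HasSum (fun i ↦ f i a) (g a))
    (hg : Integrable g μ) :
    HasSum (fun i ↦ ∫ a, f i a ∂μ) (∫ a, g a ∂μ) := by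
  have hf_nonneg_all : ∀ᵐ a ∂μ, ∀ i, 0 ≤ f i a := ae_all_iff.2 hf_nonneg
  have hg_nonneg : 0 ≤ᵐ[μ] g := by
    filter_upwards [hfg, hf_nonneg_all] with a ha ha' using ha.nonneg ha'
  have hsum : ∑' i, ∫⁻ a, ENNReal.ofReal (f i a) ∂μ = ENNReal.ofReal (∫ a, g a ∂μ) := by
    rw [← lintegral_tsum fun i ↦ (hf i).ennreal_ofReal,
      ofReal_integral_eq_lintegral_ofReal hg hg_nonneg]
    refine lintegral_congr_ae ?_
    filter_upwards [hfg, hf_nonneg_all] with a ha ha'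
    rw [← ENNReal.ofReal_tsum_of_nonneg ha' ha.summable, ha.tsum_eq]
  have hne_top : ∀ i, ∫⁻ a, ENNReal.ofReal (f i a) ∂μ ≠ ⊤ := fun i ↦
    ne_top_of_le_ne_top (hsum ▸ ENNReal.ofReal_ne_top) (ENNReal.le_tsum i)
  have h := ENNReal.hasSum_toReal (hsum ▸ ENNReal.ofReal_ne_top)
  rw [← ENNReal.tsum_toReal_eq hne_top, hsum,
    ENNReal.toReal_ofReal (integral_nonneg_of_ae hg_nonneg)] at h
  convert h using 2 with i
  exact integral_eq_lintegral_of_nonneg_ae (hf_nonneg i) (hf i).aestronglyMeasurable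

theorem hasSum_sub_succ_of_antitone {f : ℕ → ℝ} {l : ℝ} (hf : Antitone f)
    (h : Tendsto f atTop (𝓝 l)) : HasSum (fun n ↦ f n - f (n + 1)) (f 0 - l) := by
  rw [hasSum_iff_tendsto_nat_of_nonneg fun n ↦ sub_nonneg.2 (hf n.le_succ)]
  simpa only [Finset.sum_range_sub'] using tendsto_const_nhds.sub h

namespace Real

theorem tendsto_cosh_div_sinh_atTop : Tendsto (fun x ↦ cosh x / sinh x) atTop (𝓝 1) := by
  have h : Tendsto (fun x ↦ (1 + exp (-2 * x)) / (1 - exp (-2 * x))) atTop (𝓝 1) := by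
    have h0 : Tendsto (fun x : ℝ ↦ exp (-2 * x)) atTop (𝓝 0) :=
      tendsto_exp_atBot.comp (tendsto_id.const_mul_atTop_of_neg (by norm_num))
    convert (tendsto_const_nhds (x := (1 : ℝ)) |>.add h0).div
      (tendsto_const_nhds (x := (1 : ℝ)) |>.sub h0) (by norm_num) using 2 <;> norm_num
  refine h.congr' ?_
  filter_upwards [eventually_gt_atTop 0] with x hx
  have hlt : exp (-x) < exp x := exp_lt_exp.2 (by linarith)
  have hlt_one : exp (-x) < 1 := exp_lt_one_iff.2 (by linarith)
  have hsq : exp (-2 * x) = exp (-x) * exp (-x) := by rw [← exp_add]; ring_nf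
  have hmul : exp x * exp (-x) = 1 := by rw [← exp_add]; simp
  rw [cosh_eq, sinh_eq, hsq, div_div_div_cancel_right₀ two_ne_zero,
    div_eq_div_iff (by nlinarith [exp_pos (-x)]) (by nlinarith [exp_pos (-x)])]
  linear_combination (2 * exp (-x)) * hmul

theorem sinh_sub_div_sinh_mul_sinh {a b : ℝ} (ha : sinh a ≠ 0) (hb : sinh b ≠ 0) :
    sinh (b - a) / (sinh a * sinh b) = cosh a / sinh a - cosh b / sinh b := by
  rw [sinh_sub, div_sub_div _ _ ha hb]
  ring

theorem hasSum_sinh_div_sinh_mul_sinh {a y : ℝ} (ha : 0 < a) (hy : 0 < y) :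
    HasSum (fun n : ℕ ↦ sinh y / (sinh ((n + a) * y) * sinh ((n + a + 1) * y)))
      (cosh (a * y) / sinh (a * y) - 1) := by
  set u : ℕ → ℝ := fun n ↦ cosh ((n + a) * y) / sinh ((n + a) * y)
  have hterm : ∀ n : ℕ,
      sinh y / (sinh ((n + a) * y) * sinh ((n + a + 1) * y)) = u n - u (n + 1) := by
    intro n
    have hsucc : ((n + 1 : ℕ) + a) * y = (n + a + 1) * y := by push_cast; ring
    simp only [u, hsucc]
    rw [← sinh_sub_div_sinh_mul_sinh (by positivity) (by positivity)]
    ring_nf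
  have hu_anti : Antitone u := antitone_nat_of_succ_le fun n ↦ by
    rw [← sub_nonneg, ← hterm]
    positivity
  have hu_lim : Tendsto u atTop (𝓝 1) :=
    tendsto_cosh_div_sinh_atTop.comp <| tendsto_atTop_add_const_right _ a
      tendsto_natCast_atTop_atTop |>.atTop_mul_const hy
  simpa only [hterm, u, Nat.cast_zero, zero_add] using hasSum_sub_succ_of_antitone hu_anti hu_lim

theorem sinh_half_sq_mul_coth_sub_one {y : ℝ} (hy : y ≠ 0) :
    sinh (y / 2) ^ 2 * (cosh y / sinh y - 1) =
      exp (-y) * (1 - exp (-y)) / (2 * (1 + exp (-y))) := by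
  set u := exp (y / 2)
  set v := exp (-(y / 2))
  have huv : u * v = 1 := by rw [← exp_add]; simp
  have hexp : exp y = u * u := by rw [← exp_add]; ring_nf
  have hexp_neg : exp (-y) = v * v := by rw [← exp_add]; ring_nf
  have hsinh : sinh y = (u ^ 2 - v ^ 2) / 2 := by rw [sinh_eq, hexp, hexp_neg]; ring
  have hne : u ^ 2 - v ^ 2 ≠ 0 := fun h ↦ sinh_ne_zero.2 hy (by rw [hsinh, h, zero_div])
  have hpos : 0 < 1 + v * v := by positivity
  rw [sinh_eq, cosh_eq, hsinh, hexp, hexp_neg]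
  field_simp
  linear_combination (4 * u * v ^ 3 - 4 * v ^ 4) * huv

theorem sinh_half_sq_mul_coth_sub_one_nonneg {y : ℝ} (hy : 0 < y) :
    0 ≤ sinh (y / 2) ^ 2 * (cosh y / sinh y - 1) :=
  mul_nonneg (sq_nonneg _) <| sub_nonneg.2 <|
    (one_le_div (sinh_pos_iff.2 hy)).2 (sinh_lt_cosh y).le

theorem hasDerivAt_exp_neg_div_two_sub_log_one_add_exp_neg {y : ℝ} (hy : y ≠ 0) :
    HasDerivAt (fun y ↦ exp (-y) / 2 - log (1 + exp (-y)))
      (sinh (y / 2) ^ 2 * (cosh y / sinh y - 1)) y := by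
  have hexp : HasDerivAt (fun y ↦ exp (-y)) (-exp (-y)) y := by
    simpa using (hasDerivAt_neg y).exp
  have hpos : 0 < 1 + exp (-y) := by positivity
  refine ((hexp.div_const 2).sub ((hexp.const_add 1).log hpos.ne')).congr_deriv ?_
  rw [sinh_half_sq_mul_coth_sub_one hy]
  field_simp
  ring

theorem tendsto_exp_neg_div_two_sub_log_one_add_exp_neg_atTop :
    Tendsto (fun y ↦ exp (-y) / 2 - log (1 + exp (-y))) atTop (𝓝 0) := by
  have h0 : Tendsto (fun y : ℝ ↦ exp (-y)) atTop (𝓝 0) := tendsto_exp_neg_atTop_nhds_zero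
  have hlog := (continuousAt_log (by norm_num : (1 : ℝ) + 0 ≠ 0)).tendsto.comp (h0.const_add 1)
  simpa using (h0.div_const 2).sub hlog

theorem continuous_exp_neg_div_two_sub_log_one_add_exp_neg :
    Continuous (fun y ↦ exp (-y) / 2 - log (1 + exp (-y))) := by
  fun_prop (disch := intro; positivity)

theorem integrableOn_sinh_half_sq_mul_coth_sub_one :
    IntegrableOn (fun y ↦ sinh (y / 2) ^ 2 * (cosh y / sinh y - 1)) (Ioi 0) :=
  integrableOn_Ioi_deriv_of_nonneg
    continuous_exp_neg_div_two_sub_log_one_add_exp_neg.continuousWithinAt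
    (fun _ hy ↦ hasDerivAt_exp_neg_div_two_sub_log_one_add_exp_neg (ne_of_gt hy))
    (fun _ hy ↦ sinh_half_sq_mul_coth_sub_one_nonneg hy)
    tendsto_exp_neg_div_two_sub_log_one_add_exp_neg_atTop

theorem integral_sinh_half_sq_mul_coth_sub_one :
    ∫ y in Ioi 0, sinh (y / 2) ^ 2 * (cosh y / sinh y - 1) = log 2 - 1 / 2 := by
  rw [integral_Ioi_of_hasDerivAt_of_nonneg
    continuous_exp_neg_div_two_sub_log_one_add_exp_neg.continuousWithinAt
    (fun _ hy ↦ hasDerivAt_exp_neg_div_two_sub_log_one_add_exp_neg (ne_of_gt hy))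
    (fun _ hy ↦ sinh_half_sq_mul_coth_sub_one_nonneg hy)
    tendsto_exp_neg_div_two_sub_log_one_add_exp_neg_atTop]
  norm_num

end Real

/-- `∑_{k=2}^∞ ∫_0^∞ sinh³(y/2)/(sinh(ky/2)sinh((k+1)y/2)) dy = ln 2 - 1/2`
(the index `k = n + 2` ranges over `n : ℕ`). -/
theorem sum_sinh_integrals_eq_log_two_sub_half :
    HasSum (fun n : ℕ =>
        ∫ y in Set.Ioi (0:ℝ),
          sinh (y/2)^3 / (sinh (((n:ℝ)+2)*y/2) * sinh (((n:ℝ)+3)*y/2)))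
      (Real.log 2 - 1/2) := by
  have hpointwise : ∀ y ∈ Ioi (0 : ℝ), HasSum
      (fun n : ℕ ↦ sinh (y/2)^3 / (sinh (((n:ℝ)+2)*y/2) * sinh (((n:ℝ)+3)*y/2)))
      (sinh (y / 2) ^ 2 * (cosh y / sinh y - 1)) := by
    intro y hy
    have h := (hasSum_sinh_div_sinh_mul_sinh two_pos (half_pos hy)).mul_left (sinh (y / 2) ^ 2)
    rw [mul_div_cancel₀ y two_ne_zero] at h
    refine h.congr_fun fun n ↦ ?_
    rw [mul_div_assoc', ← pow_succ]
    ring_nf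
  rw [← integral_sinh_half_sq_mul_coth_sub_one]
  refine hasSum_integral_of_nonneg (fun n ↦ by fun_prop) (fun n ↦ ?_)
    ((ae_restrict_mem measurableSet_Ioi).mono hpointwise)
    integrableOn_sinh_half_sq_mul_coth_sub_one
  filter_upwards [ae_restrict_mem measurableSet_Ioi] with y (hy : 0 < y)
  positivity
end

section
/- There exists a constant C > 0 such that for every integer k ≥ 2, ∫_{0}^{∞} sinh³(y/2)/(sinh(ky/2) · sinh((k+1)y/2)) dy ≤ C/k⁴. -/
open MeasureTheory Real Set

open MeasureTheory Real Set

lemma my_sinh_le_two_mul {x : ℝ} (hx0 : 0 ≤ x) (hx : x ≤ 1/2) : Real.sinh x ≤ 2 * x := by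
  have h1 : Real.sinh x ≤ x * Real.exp x := by
    rw [Real.sinh_eq]
    have h2 : (-(2*x)) + 1 ≤ Real.exp (-(2*x)) := Real.add_one_le_exp _
    have h3 : Real.exp (-x) = Real.exp x * Real.exp (-(2*x)) := by
      rw [← Real.exp_add]; ring_nf
    nlinarith [Real.exp_pos x]
  have h5 : Real.exp (1/2) < 2 := by
    have e1 : Real.exp (1/2) * Real.exp (1/2) = Real.exp 1 := by
      rw [← Real.exp_add]; norm_num
    nlinarith [Real.exp_one_lt_d9, Real.exp_pos (1/2)]
  have h4 : Real.exp x ≤ Real.exp (1/2) := Real.exp_le_exp.2 hx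
  nlinarith [Real.exp_pos x]

lemma my_quarter_exp_le_sinh {x : ℝ} (hx : 1/2 ≤ x) : Real.exp x / 4 ≤ Real.sinh x := by
  rw [Real.sinh_eq]
  have h1 : Real.exp (-x) = Real.exp x * Real.exp (-(2*x)) := by
    rw [← Real.exp_add]; ring_nf
  have h2 : Real.exp (-(2*x)) ≤ Real.exp (-1) := Real.exp_le_exp.2 (by linarith)
  have h3 : Real.exp (-1) ≤ 1/2 := by
    have e1 : Real.exp (-1) * Real.exp 1 = 1 := by
      rw [← Real.exp_add]; norm_num
    have e2 : (2:ℝ) ≤ Real.exp 1 := by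
      have := Real.add_one_le_exp (1:ℝ); linarith
    nlinarith [Real.exp_pos (-1)]
  nlinarith [Real.exp_pos x]

lemma my_sinh_le_half_exp (x : ℝ) : Real.sinh x ≤ Real.exp x / 2 := by
  rw [Real.sinh_eq]
  have := Real.exp_pos (-x)
  linarith

lemma my_pointwise_bound {K y : ℝ} (hK : 2 ≤ K) (hy : 0 < y) :
    Real.sinh (y/2)^3 / (Real.sinh (K*y/2) * Real.sinh ((K+1)*y/2)) ≤
      if y ≤ 1/K then 4*y/K^2 else if y ≤ 1 then 16*y^3*Real.exp (-K*y)
        else 2*Real.exp (-(K-1)*y) := by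
  have hK0 : (0:ℝ) < K := by linarith
  have hs1 : 0 < Real.sinh (K*y/2) := Real.sinh_pos_iff.2 (by positivity)
  have hs2 : 0 < Real.sinh ((K+1)*y/2) := Real.sinh_pos_iff.2 (by positivity)
  have hsn : 0 ≤ Real.sinh (y/2) := Real.sinh_nonneg_iff.2 (by positivity)
  split_ifs with h1 h2
  · -- y ≤ 1/K
    have hy2 : y ≤ 1/2 := le_trans h1 (by rw [div_le_div_iff₀ hK0] <;> linarith)
    have hnum : Real.sinh (y/2) ≤ y := by
      have := my_sinh_le_two_mul (x := y/2) (by linarith) (by linarith)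
      linarith
    have hnum3 : Real.sinh (y/2)^3 ≤ y^3 := pow_le_pow_left₀ hsn hnum 3
    have hd1 : K*y/2 ≤ Real.sinh (K*y/2) := Real.self_le_sinh_iff.2 (by positivity)
    have hd2 : K*y/2 ≤ Real.sinh ((K+1)*y/2) := by
      have : K*y/2 ≤ (K+1)*y/2 := by nlinarith
      exact this.trans (Real.self_le_sinh_iff.2 (by positivity))
    have hprod : K*y/2 * (K*y/2) ≤ Real.sinh (K*y/2) * Real.sinh ((K+1)*y/2) :=
      mul_le_mul hd1 hd2 (by positivity) hs1.le
    calc Real.sinh (y/2)^3 / (Real.sinh (K*y/2) * Real.sinh ((K+1)*y/2))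
        ≤ y^3 / (K*y/2 * (K*y/2)) := div_le_div₀ (by positivity) hnum3 (by positivity) hprod
      _ = 4*y/K^2 := by field_simp; ring
  · -- 1/K < y ≤ 1
    push_neg at h1
    have hKy : 1 ≤ K*y := by
      rw [div_lt_iff₀ hK0] at h1; nlinarith
    have hnum : Real.sinh (y/2) ≤ y := by
      have := my_sinh_le_two_mul (x := y/2) (by linarith) (by linarith)
      linarith
    have hnum3 : Real.sinh (y/2)^3 ≤ y^3 := pow_le_pow_left₀ hsn hnum 3
    have hd1 : Real.exp (K*y/2)/4 ≤ Real.sinh (K*y/2) :=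
      my_quarter_exp_le_sinh (by linarith)
    have hd2 : Real.exp (K*y/2)/4 ≤ Real.sinh ((K+1)*y/2) := by
      refine le_trans ?_ (my_quarter_exp_le_sinh (by nlinarith))
      have : Real.exp (K*y/2) ≤ Real.exp ((K+1)*y/2) := Real.exp_le_exp.2 (by nlinarith)
      linarith
    have hprod : Real.exp (K*y)/16 ≤ Real.sinh (K*y/2) * Real.sinh ((K+1)*y/2) := by
      have e1 : Real.exp (K*y/2) * Real.exp (K*y/2) = Real.exp (K*y) := by
        rw [← Real.exp_add]; ring_nf
      have := mul_le_mul hd1 hd2 (by positivity) hs1.le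
      nlinarith [Real.exp_pos (K*y/2)]
    calc Real.sinh (y/2)^3 / (Real.sinh (K*y/2) * Real.sinh ((K+1)*y/2))
        ≤ y^3 / (Real.exp (K*y)/16) := div_le_div₀ (by positivity) hnum3 (by positivity) hprod
      _ = 16*y^3*Real.exp (-K*y) := by
          rw [neg_mul, Real.exp_neg]
          field_simp
  · -- y > 1
    push_neg at h1 h2
    have hnum : Real.sinh (y/2) ≤ Real.exp (y/2)/2 := my_sinh_le_half_exp _
    have hnum3 : Real.sinh (y/2)^3 ≤ (Real.exp (y/2)/2)^3 := pow_le_pow_left₀ hsn hnum 3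
    have hd1 : Real.exp (K*y/2)/4 ≤ Real.sinh (K*y/2) :=
      my_quarter_exp_le_sinh (by nlinarith)
    have hd2 : Real.exp ((K+1)*y/2)/4 ≤ Real.sinh ((K+1)*y/2) :=
      my_quarter_exp_le_sinh (by nlinarith)
    have hprod : Real.exp ((2*K+1)*y/2)/16 ≤ Real.sinh (K*y/2) * Real.sinh ((K+1)*y/2) := by
      have e1 : Real.exp (K*y/2) * Real.exp ((K+1)*y/2) = Real.exp ((2*K+1)*y/2) := by
        rw [← Real.exp_add]; ring_nf
      have := mul_le_mul hd1 hd2 (by positivity) hs1.le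
      nlinarith [Real.exp_pos (K*y/2), Real.exp_pos ((K+1)*y/2)]
    calc Real.sinh (y/2)^3 / (Real.sinh (K*y/2) * Real.sinh ((K+1)*y/2))
        ≤ (Real.exp (y/2)/2)^3 / (Real.exp ((2*K+1)*y/2)/16) :=
          div_le_div₀ (by positivity) hnum3 (by positivity) hprod
      _ = 2*Real.exp (-(K-1)*y) := by
          have e2 : Real.exp (y/2)^3 = Real.exp (3*y/2) := by
            rw [show (3:ℝ)*y/2 = y/2 + y/2 + y/2 by ring, Real.exp_add, Real.exp_add]; ring
          have e3 : Real.exp (-(K-1)*y) * Real.exp ((2*K+1)*y/2) = Real.exp (3*y/2) := by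
            rw [← Real.exp_add]; ring_nf
          rw [div_pow, e2]
          have e4 : Real.exp ((1-K)*y) = Real.exp (-(K-1)*y) := by ring_nf
          field_simp
          linear_combination (norm := ring_nf) (-16) * e3 - 16 * Real.exp ((2*K+1)*y/2) * e4


lemma my_cube_exp_integrable {K : ℝ} (hK : 0 < K) :
    IntegrableOn (fun y : ℝ => y^3 * Real.exp (-(K*y))) (Ioi 0) := by
  have h := integrableOn_rpow_mul_exp_neg_mul_rpow (s := 3) (p := 1) (b := K)
    (by norm_num) zero_lt_one hK
  refine h.congr_fun (fun y hy => ?_) measurableSet_Ioi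
  rw [mem_Ioi] at hy
  beta_reduce
  rw [Real.rpow_one, show (3:ℝ) = ((3:ℕ):ℝ) by norm_num, Real.rpow_natCast, neg_mul]

lemma my_cube_exp_integral {K : ℝ} (hK : 0 < K) :
    ∫ y in Ioi (0:ℝ), y^3 * Real.exp (-(K*y)) = 6/K^4 := by
  have h := Real.integral_rpow_mul_exp_neg_mul_Ioi (a := 4) (r := K) (by norm_num) hK
  rw [show ∫ t in Ioi (0:ℝ), t ^ ((4:ℝ)-1) * Real.exp (-(K*t))
      = ∫ y in Ioi (0:ℝ), y^3 * Real.exp (-(K*y)) from ?_] at h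
  · rw [h, show (1/K) ^ (4:ℝ) = 1/K^4 from ?_, Real.Gamma_ofNat_eq_factorial 3]
    · norm_num [Nat.factorial]
      ring
    · rw [show (4:ℝ) = ((4:ℕ):ℝ) by norm_num, Real.rpow_natCast]
      norm_num
  · refine setIntegral_congr_fun measurableSet_Ioi (fun y hy => ?_)
    rw [show (4:ℝ)-1 = ((3:ℕ):ℝ) by norm_num, Real.rpow_natCast]


set_option maxHeartbeats 1000000 in
/-- There is a constant `C > 0` such that for every `k ≥ 2`,
`∫_0^∞ sinh³(y/2)/(sinh(ky/2)sinh((k+1)y/2)) dy ≤ C/k⁴`. -/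
theorem sinh_integral_bound_k4 :
    ∃ C : ℝ, 0 < C ∧ ∀ k : ℕ, 2 ≤ k →
      ∫ y in Set.Ioi (0:ℝ),
        sinh (y/2)^3 / (sinh ((k:ℝ)*y/2) * sinh (((k:ℝ)+1)*y/2)) ≤ C / (k:ℝ)^4 := by
  refine ⟨1000, by norm_num, fun k hk => ?_⟩
  set K : ℝ := (k:ℝ) with hKdef
  have hK : (2:ℝ) ≤ K := by rw [hKdef]; exact_mod_cast hk
  have hK0 : (0:ℝ) < K := by linarith
  have hK1 : (0:ℝ) < K - 1 := by linarith
  have hinv : (0:ℝ) < 1/K := by positivity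
  have hinvle : 1/K ≤ 1 := by rw [div_le_one hK0]; linarith
  set g : ℝ → ℝ := fun y => if y ≤ 1/K then 4*y/K^2 else if y ≤ 1 then
    16*y^3*Real.exp (-K*y) else 2*Real.exp (-(K-1)*y) with hg
  have I1 : IntegrableOn g (Ioc 0 (1/K)) := by
    have h : IntegrableOn (fun y : ℝ => 4*y/K^2) (Ioc 0 (1/K)) :=
      Continuous.integrableOn_Ioc (by continuity)
    exact h.congr_fun (fun y hy => by simp only [hg]; rw [if_pos hy.2]) measurableSet_Ioc
  have I2 : IntegrableOn g (Ioc (1/K) 1) := by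
    have h : IntegrableOn (fun y : ℝ => 16*y^3*Real.exp (-K*y)) (Ioc (1/K) 1) :=
      Continuous.integrableOn_Ioc (by continuity)
    refine h.congr_fun (fun y hy => ?_) measurableSet_Ioc
    simp only [hg]
    rw [if_neg (not_le.2 hy.1), if_pos hy.2]
  have I3 : IntegrableOn g (Ioi 1) := by
    have h : IntegrableOn (fun x : ℝ => 2 * Real.exp (-(K-1) * x)) (Ioi 1) :=
      Integrable.const_mul (exp_neg_integrableOn_Ioi 1 hK1) 2
    refine h.congr_fun (fun y hy => ?_) measurableSet_Ioi
    rw [mem_Ioi] at hy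
    simp only [hg]
    rw [if_neg (not_le.2 (by linarith)), if_neg (not_le.2 hy)]
  have hsets : Ioc (0:ℝ) (1/K) ∪ Ioc (1/K) 1 ∪ Ioi 1 = Ioi 0 := by
    rw [Ioc_union_Ioc_eq_Ioc hinv.le hinvle, Ioc_union_Ioi_eq_Ioi zero_le_one]
  have Ig : IntegrableOn g (Ioi 0) := by
    rw [← hsets]; exact (I1.union I2).union I3
  have hmono : (∫ y in Ioi (0:ℝ), sinh (y/2)^3 / (sinh (K*y/2) * sinh ((K+1)*y/2)))
      ≤ ∫ y in Ioi (0:ℝ), g y := by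
    refine integral_mono_of_nonneg ?_ Ig ?_
    · refine (ae_restrict_iff' measurableSet_Ioi).2 (ae_of_all _ fun y hy => ?_)
      rw [mem_Ioi] at hy
      have h1 : 0 ≤ Real.sinh (y/2) := Real.sinh_nonneg_iff.2 (by positivity)
      have h2 : 0 ≤ Real.sinh (K*y/2) := Real.sinh_nonneg_iff.2 (by positivity)
      have h3 : 0 ≤ Real.sinh ((K+1)*y/2) := Real.sinh_nonneg_iff.2 (by positivity)
      positivity
    · refine (ae_restrict_iff' measurableSet_Ioi).2 (ae_of_all _ fun y hy => ?_)
      rw [mem_Ioi] at hy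
      exact my_pointwise_bound hK hy
  have hsplit : ∫ y in Ioi (0:ℝ), g y
      = (∫ y in Ioc 0 (1/K), g y) + ((∫ y in Ioc (1/K) 1, g y) + (∫ y in Ioi 1, g y)) := by
    have d1 : Disjoint (Ioc (0:ℝ) (1/K)) (Ioc (1/K) 1 ∪ Ioi 1) := by
      rw [Ioc_union_Ioi_eq_Ioi hinvle]
      exact Ioc_disjoint_Ioi_same
    have d2 : Disjoint (Ioc ((1:ℝ)/K) 1) (Ioi 1) := Ioc_disjoint_Ioi_same
    rw [← hsets, union_assoc,
      setIntegral_union d1 ((measurableSet_Ioc).union measurableSet_Ioi) I1 (I2.union I3),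
      setIntegral_union d2 measurableSet_Ioi I2 I3]
  have hP1 : ∫ y in Ioc (0:ℝ) (1/K), g y = 2/K^4 := by
    rw [setIntegral_congr_fun measurableSet_Ioc
        (fun y (hy : y ∈ Ioc (0:ℝ) (1/K)) => by
          simp only [hg]; rw [if_pos hy.2]; ring : EqOn g (fun y : ℝ => (4/K^2)*y) _)]
    rw [← intervalIntegral.integral_of_le hinv.le, intervalIntegral.integral_const_mul,
      _root_.integral_id]
    field_simp
    ring
  have hP2 : ∫ y in Ioc ((1:ℝ)/K) 1, g y ≤ 96/K^4 := by
    have e : EqOn g (fun y : ℝ => 16*(y^3*Real.exp (-(K*y)))) (Ioc (1/K) 1) := by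
      intro y hy
      simp only [hg]
      rw [if_neg (not_le.2 hy.1), if_pos hy.2, neg_mul]
      ring
    rw [setIntegral_congr_fun measurableSet_Ioc e]
    have hsub : Ioc ((1:ℝ)/K) 1 ⊆ Ioi 0 := fun y hy => lt_trans hinv hy.1
    calc ∫ y in Ioc ((1:ℝ)/K) 1, 16*(y^3*Real.exp (-(K*y)))
        ≤ ∫ y in Ioi (0:ℝ), 16*(y^3*Real.exp (-(K*y))) := by
          refine setIntegral_mono_set ((my_cube_exp_integrable hK0).const_mul 16)
            ((ae_restrict_iff' measurableSet_Ioi).2 (ae_of_all _ fun y hy => ?_))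
            (HasSubset.Subset.eventuallyLE hsub)
          rw [mem_Ioi] at hy
          positivity
      _ = 16 * (6/K^4) := by rw [MeasureTheory.integral_const_mul, my_cube_exp_integral hK0]
      _ ≤ 96/K^4 := by rw [show 16*((6:ℝ)/K^4) = 96/K^4 by ring]
  have hP3 : ∫ y in Ioi (1:ℝ), g y ≤ 144/K^4 := by
    have e : EqOn g (fun y : ℝ => 2*Real.exp (-(K-1)*y)) (Ioi 1) := by
      intro y hy
      rw [mem_Ioi] at hy
      simp only [hg]
      rw [if_neg (not_le.2 (by linarith)), if_neg (not_le.2 hy)]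
    rw [setIntegral_congr_fun measurableSet_Ioi e]
    have hexp1 : IntegrableOn (fun y : ℝ => Real.exp (-y)) (Ioi 1) := by
      have h := exp_neg_integrableOn_Ioi 1 (one_pos (α := ℝ))
      refine h.congr_fun (fun y _ => by norm_num) measurableSet_Ioi
    have step1 : ∫ y in Ioi (1:ℝ), 2*Real.exp (-(K-1)*y)
        ≤ ∫ y in Ioi (1:ℝ), (2*Real.exp (2-K))*Real.exp (-y) := by
      refine setIntegral_mono_on
        (Integrable.const_mul (exp_neg_integrableOn_Ioi 1 hK1) 2)
        (hexp1.const_mul _) measurableSet_Ioi fun y hy => ?_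
      rw [mem_Ioi] at hy
      have h : Real.exp (-(K-1)*y) ≤ Real.exp (2-K) * Real.exp (-y) := by
        rw [← Real.exp_add]
        exact Real.exp_le_exp.2 (by nlinarith)
      nlinarith [h]
    have step2 : ∫ y in Ioi (1:ℝ), (2*Real.exp (2-K))*Real.exp (-y)
        = 2*Real.exp (2-K)*Real.exp (-1) := by
      rw [MeasureTheory.integral_const_mul, integral_exp_neg_Ioi]
    have hfac : K^4/24 ≤ Real.exp K := by
      have h := Real.pow_div_factorial_le_exp K hK0.le 4
      norm_num [Nat.factorial] at h
      exact h
    have hEm : Real.exp (2-K) * Real.exp (-1) = Real.exp 1 * Real.exp (-K) := by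
      rw [← Real.exp_add, ← Real.exp_add]; ring_nf
    have hprod : Real.exp (-K) * Real.exp K = 1 := by
      rw [← Real.exp_add, neg_add_cancel, Real.exp_zero]
    have hexpK : Real.exp (-K) ≤ 24/K^4 := by
      rw [le_div_iff₀ (by positivity)]
      nlinarith [mul_le_mul_of_nonneg_left hfac (Real.exp_pos (-K)).le]
    have he1 : Real.exp 1 < 3 := by nlinarith [Real.exp_one_lt_d9]
    calc ∫ y in Ioi (1:ℝ), 2*Real.exp (-(K-1)*y)
        ≤ 2*Real.exp (2-K)*Real.exp (-1) := step1.trans (le_of_eq step2)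
      _ = 2*(Real.exp 1 * Real.exp (-K)) := by rw [mul_assoc, hEm]
      _ ≤ 2*(3 * (24/K^4)) := by
          have h0 : 0 ≤ Real.exp (-K) := (Real.exp_pos _).le
          have h2 := mul_le_mul he1.le hexpK h0 (by norm_num : (0:ℝ) ≤ 3)
          linarith
      _ ≤ 144/K^4 := by
          rw [show 2*(3*((24:ℝ)/K^4)) = 144/K^4 by ring]
  calc (∫ y in Ioi (0:ℝ), sinh (y/2)^3 / (sinh (K*y/2) * sinh ((K+1)*y/2)))
      ≤ ∫ y in Ioi (0:ℝ), g y := hmono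
    _ = (∫ y in Ioc 0 (1/K), g y) + ((∫ y in Ioc (1/K) 1, g y) + (∫ y in Ioi 1, g y)) := hsplit
    _ ≤ 2/K^4 + (96/K^4 + 144/K^4) := by
        exact add_le_add (le_of_eq hP1) (add_le_add hP2 hP3)
    _ ≤ 1000/K^4 := by
        rw [show 2/K^4 + ((96:ℝ)/K^4 + 144/K^4) = 242/K^4 by ring]
        gcongr
        norm_num
end

section
/- Let k ≥ 1 be an integer, x, z ≥ 0, y > 0, and let L ≥ 0 be defined by cosh(L/2) = (sinh((k+1)y/2)/sinh(y/2))·cosh(x/2) + (sinh(ky/2)/sinh(y/2))·cosh(z/2) (the one-sided iterated eight length formula). Then L ≥ x + k·y and L ≥ z. -/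
open Real

/-- One-sided iterated eight length lower bound: for integer `k ≥ 1`, `x, z ≥ 0`, `y > 0`,
`L ≥ 0` with `cosh(L/2) = (sinh((k+1)y/2)/sinh(y/2))cosh(x/2) + (sinh(ky/2)/sinh(y/2))cosh(z/2)`,
one has `L ≥ x + ky` and `L ≥ z`. -/
theorem one_sided_iterated_eight_length_lower_bound (k : ℕ) (hk : 1 ≤ k)
    (x y z L : ℝ) (hx : 0 ≤ x) (hy : 0 < y) (hz : 0 ≤ z) (hL : 0 ≤ L)
    (h : cosh (L/2) =
        sinh (((k:ℝ)+1)*y/2) / sinh (y/2) * cosh (x/2) +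
        sinh ((k:ℝ)*y/2) / sinh (y/2) * cosh (z/2)) :
    x + (k:ℝ)*y ≤ L ∧ z ≤ L := by
  set t := y/2 with ht
  have hk1 : (1:ℝ) ≤ (k:ℝ) := by exact_mod_cast hk
  have hst : 0 < sinh t := sinh_pos_iff.mpr (by positivity)
  have hkt : t ≤ (k:ℝ)*t := le_mul_of_one_le_left (by positivity) hk1
  have hskt : 0 < sinh ((k:ℝ)*t) := lt_of_lt_of_le hst (sinh_le_sinh.mpr hkt)
  have hadd : sinh (((k:ℝ)+1)*y/2) = sinh ((k:ℝ)*t) * cosh t + cosh ((k:ℝ)*t) * sinh t := by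
    have : ((k:ℝ)+1)*y/2 = (k:ℝ)*t + t := by ring
    rw [this, sinh_add]
  have hky : (k:ℝ)*y/2 = (k:ℝ)*t := by ring
  -- first inequality: cosh((x/2 + k*t)) ≤ cosh (L/2)
  have h1 : cosh (x/2 + (k:ℝ)*t) ≤ cosh (L/2) := by
    rw [h, hadd, hky, cosh_add]
    rw [div_mul_eq_mul_div, div_mul_eq_mul_div, ← add_div, le_div_iff₀ hst]
    have hsx : sinh (x/2) ≤ cosh (x/2) := (sinh_lt_cosh _).le
    have h2 : sinh t ≤ cosh t := (sinh_lt_cosh _).le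
    nlinarith [mul_le_mul hsx h2 hst.le (cosh_pos (x/2)).le, hskt.le,
      mul_pos hskt (cosh_pos (z/2)),
      mul_le_mul_of_nonneg_left (mul_le_mul hsx h2 hst.le (cosh_pos (x/2)).le) hskt.le]
  have h2 : cosh (z/2) ≤ cosh (L/2) := by
    rw [h, hky]
    have hcoef : 1 ≤ sinh ((k:ℝ)*t) / sinh t := (one_le_div hst).mpr (sinh_le_sinh.mpr hkt)
    have hpos1 : 0 ≤ sinh (((k:ℝ)+1)*y/2) / sinh t * cosh (x/2) := by
      have : 0 < sinh (((k:ℝ)+1)*y/2) := by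
        rw [hadd]; positivity
      positivity
    nlinarith [cosh_pos (z/2)]
  have htnn : 0 ≤ x/2 + (k:ℝ)*t := by
    have : 0 ≤ (k:ℝ)*t := by rw [ht]; positivity
    linarith
  constructor
  · have h3 := cosh_le_cosh.mp h1
    rw [abs_of_nonneg htnn, abs_of_nonneg (by linarith : (0:ℝ) ≤ L/2)] at h3
    rw [ht] at h3; linarith
  · have h3 := cosh_le_cosh.mp h2
    rw [abs_of_nonneg (by linarith : (0:ℝ) ≤ z/2), abs_of_nonneg (by linarith : (0:ℝ) ≤ L/2)] at h3
    linarith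
end

section
/- For nonnegative reals x₁, …, xₙ (all nonzero), the weighted series bound ∑_{d ∈ ℕⁿ} |d| · ∏_{i=1}^{n} x_i^{2d_i}/(2d_i+1)! ≤ (1/2)·(x₁² + ⋯ + xₙ²) · ∏_{i=1}^{n} sinh(x_i)/x_i holds, where |d| = d₁ + ⋯ + dₙ. -/
open Real

lemma step_mul (n : ℕ) (a : ℕ → ℝ) (b : (Fin n → ℕ) → ℝ) (sa sb : ℝ)
    (h1 : 0 ≤ a) (h2 : 0 ≤ b) (ha : HasSum a sa) (hb : HasSum b sb) :
    HasSum (fun d : Fin (n+1) → ℕ => a (d 0) * b (fun i => d i.succ)) (sa * sb) := by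
  refine ((Fin.consEquiv (fun _ : Fin (n+1) => ℕ)).hasSum_iff).mp ?_
  convert ha.mul hb (Summable.mul_of_nonneg ha.summable hb.summable h1 h2) using 1
  · rfl
  · funext d
    simp [Fin.consEquiv]

lemma hasSum_pi_prod : ∀ (n : ℕ) (f : Fin n → ℕ → ℝ) (S : Fin n → ℝ),
    (∀ i k, 0 ≤ f i k) → (∀ i, HasSum (f i) (S i)) →
    HasSum (fun d : Fin n → ℕ => ∏ i, f i (d i)) (∏ i, S i) := by
  intro n
  induction n with
  | zero =>
    intro f S _ _
    simpa using hasSum_fintype (fun d : Fin 0 → ℕ => ∏ i, f i (d i))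
  | succ n ih =>
    intro f S hnn hS
    have h2 : HasSum (fun d : Fin n → ℕ => ∏ i, f i.succ (d i)) (∏ i : Fin n, S i.succ) :=
      ih (fun i => f i.succ) (fun i : Fin n => S i.succ) (fun i k => hnn _ k) (fun i => hS _)
    have h1 : 0 ≤ f 0 := fun k => hnn 0 k
    have h2' : 0 ≤ (fun d : Fin n → ℕ => ∏ i, f i.succ (d i)) :=
      fun d => Finset.prod_nonneg fun i _ => hnn _ _
    have key := step_mul n (f 0) _ (S 0) _ h1 h2' (hS 0) h2
    rw [Fin.prod_univ_succ]
    convert key using 2 with d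
    rw [Fin.prod_univ_succ]

lemma aux_single (x : ℝ) (hx : 0 < x) :
    HasSum (fun k : ℕ => x ^ (2*k) / ((2*k+1).factorial : ℝ)) (sinh x / x) := by
  have h := (Real.hasSum_sinh x).div_const x
  convert h using 2 with k
  · rfl
  rw [pow_succ]
  field_simp

lemma aux_weighted (x : ℝ) (hx : 0 < x) :
    Summable (fun k : ℕ => (k:ℝ) * (x ^ (2*k) / ((2*k+1).factorial : ℝ))) ∧
    ∑' k : ℕ, (k:ℝ) * (x ^ (2*k) / ((2*k+1).factorial : ℝ)) ≤ x^2/2 * (sinh x / x) := by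
  have hS := aux_single x hx
  set f : ℕ → ℝ := fun k => x ^ (2*k) / ((2*k+1).factorial : ℝ) with hf
  set g : ℕ → ℝ := fun k => (k:ℝ) * f k with hg
  have hkey : ∀ k : ℕ, g (k+1) ≤ x^2/2 * f k := by
    intro k
    have hfac : (2*(k+1)+1).factorial = (2*k+3)*((2*k+2)*(2*k+1).factorial) := by
      rw [show 2*(k+1)+1 = 2*k+1+1+1 by ring, Nat.factorial_succ, Nat.factorial_succ]
    have hp : (0:ℝ) < ((2*k+1).factorial : ℝ) := by positivity
    simp only [hg, hf, hfac]
    push_cast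
    rw [show 2*(k+1) = 2*k+2 by ring, pow_add, mul_div_assoc', div_mul_div_comm,
      div_le_div_iff₀ (by positivity) (by positivity)]
    have h1 : (0:ℝ) ≤ x^(2*k) * x^2 * ((2*k+1).factorial : ℝ) := by positivity
    nlinarith [h1, mul_nonneg h1 (sq_nonneg (k:ℝ)), mul_nonneg h1 (Nat.cast_nonneg k : (0:ℝ) ≤ k)]
  have hfsum : Summable (fun k => x^2/2 * f k) := hS.summable.mul_left _
  have hshift : Summable (fun k => g (k+1)) :=
    Summable.of_nonneg_of_le (fun k => by simp only [hg, hf]; positivity) hkey hfsum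
  have hsg : Summable g := (summable_nat_add_iff 1).mp hshift
  refine ⟨hsg, ?_⟩
  rw [Summable.tsum_eq_zero_add hsg]
  have hg0 : g 0 = 0 := by simp [hg]
  rw [hg0, zero_add]
  calc ∑' k, g (k+1) ≤ ∑' k, x^2/2 * f k := Summable.tsum_le_tsum hkey hshift hfsum
    _ = x^2/2 * (sinh x / x) := (hS.mul_left _).tsum_eq

/-- Weighted series bound: for positive reals `x₁, …, xₙ`,
`∑_{d ∈ ℕⁿ} |d| ∏ᵢ xᵢ^{2dᵢ}/(2dᵢ+1)! ≤ (1/2)(∑ᵢ xᵢ²) ∏ᵢ sinh(xᵢ)/xᵢ`,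
where `|d| = d₁ + ⋯ + dₙ` (the series converges). -/
theorem weighted_series_bound (n : ℕ) (x : Fin n → ℝ) (hx : ∀ i, 0 < x i) :
    Summable (fun d : Fin n → ℕ =>
      ((∑ i, d i : ℕ) : ℝ) * ∏ i, x i ^ (2 * d i) / (((2 * d i + 1).factorial : ℝ))) ∧
    ∑' d : Fin n → ℕ,
        ((∑ i, d i : ℕ) : ℝ) * ∏ i, x i ^ (2 * d i) / (((2 * d i + 1).factorial : ℝ)) ≤
      (1/2) * (∑ i, x i ^ 2) * ∏ i, sinh (x i) / x i := by
  have hfnn : ∀ (i : Fin n) (k : ℕ), 0 ≤ x i ^ (2*k) / ((2*k+1).factorial : ℝ) := by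
    intro i k
    have := (hx i).le
    positivity
  have hfS : ∀ i, HasSum (fun k : ℕ => x i ^ (2*k) / ((2*k+1).factorial : ℝ))
      (sinh (x i) / x i) := fun i => aux_single (x i) (hx i)
  have hSpos : ∀ i, 0 < sinh (x i) / x i :=
    fun i => div_pos (Real.sinh_pos_iff.mpr (hx i)) (hx i)
  have hw := fun i => aux_weighted (x i) (hx i)
  set T : Fin n → ℝ := fun j => ∑' k : ℕ, (k:ℝ) * (x j ^ (2*k) / ((2*k+1).factorial : ℝ))
    with hT
  have hTsum : ∀ j, HasSum (fun k : ℕ => (k:ℝ) * (x j ^ (2*k) / ((2*k+1).factorial : ℝ)))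
      (T j) := fun j => (hw j).1.hasSum
  have hTle : ∀ j, T j ≤ (x j)^2/2 * (sinh (x j) / x j) := fun j => (hw j).2
  -- per-coordinate weighted HasSum over tuples
  have hj : ∀ j : Fin n, HasSum
      (fun d : Fin n → ℕ => (d j : ℝ) * ∏ i, x i ^ (2 * d i) / ((2 * d i + 1).factorial : ℝ))
      (∏ i, (if i = j then T j else sinh (x i) / x i)) := by
    intro j
    have h := hasSum_pi_prod n
      (fun i k => if i = j then (k:ℝ) * (x i ^ (2*k) / ((2*k+1).factorial : ℝ))
        else x i ^ (2*k) / ((2*k+1).factorial : ℝ))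
      (fun i => if i = j then T j else sinh (x i) / x i)
      (fun i k => by
        by_cases hij : i = j
        · simp only [hij, if_pos rfl]
          exact mul_nonneg (Nat.cast_nonneg _) (hfnn j k)
        · simp only [if_neg hij]
          exact hfnn i k)
      (fun i => by
        by_cases hij : i = j
        · subst hij
          simpa using hTsum i
        · simpa [hij] using hfS i)
    have hprod : ∀ d : Fin n → ℕ,
        (∏ i, (if i = j then (d i:ℝ) * (x i ^ (2*d i) / ((2*d i+1).factorial : ℝ))
          else x i ^ (2*d i) / ((2*d i+1).factorial : ℝ)))
        = (d j : ℝ) * ∏ i, x i ^ (2 * d i) / ((2 * d i + 1).factorial : ℝ) := by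
      intro d
      rw [← Finset.mul_prod_erase Finset.univ _ (Finset.mem_univ j),
        ← Finset.mul_prod_erase Finset.univ
          (fun i => x i ^ (2*d i) / ((2*d i+1).factorial : ℝ)) (Finset.mem_univ j),
        if_pos rfl,
        Finset.prod_congr rfl (fun i hi => if_neg (Finset.ne_of_mem_erase hi))]
      ring
    convert h using 1
    funext d
    exact (hprod d).symm
  have htotal : HasSum
      (fun d : Fin n → ℕ =>
        ∑ j, (d j : ℝ) * ∏ i, x i ^ (2 * d i) / ((2 * d i + 1).factorial : ℝ))
      (∑ j, ∏ i, (if i = j then T j else sinh (x i) / x i)) :=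
    hasSum_sum (fun j _ => hj j)
  have heq : (fun d : Fin n → ℕ =>
      ((∑ i, d i : ℕ) : ℝ) * ∏ i, x i ^ (2 * d i) / ((2 * d i + 1).factorial : ℝ))
      = (fun d : Fin n → ℕ =>
        ∑ j, (d j : ℝ) * ∏ i, x i ^ (2 * d i) / ((2 * d i + 1).factorial : ℝ)) := by
    funext d
    rw [Nat.cast_sum, Finset.sum_mul]
  rw [heq]
  refine ⟨htotal.summable, ?_⟩
  rw [htotal.tsum_eq]
  have hA : ∀ j : Fin n, ∏ i, (if i = j then T j else sinh (x i) / x i)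
      ≤ (x j)^2/2 * ∏ i, sinh (x i) / x i := by
    intro j
    rw [← Finset.mul_prod_erase Finset.univ _ (Finset.mem_univ j),
      ← Finset.mul_prod_erase Finset.univ (fun i => sinh (x i) / x i) (Finset.mem_univ j),
      ← mul_assoc, if_pos rfl,
      Finset.prod_congr rfl (fun i hi => if_neg (Finset.ne_of_mem_erase hi))]
    exact mul_le_mul_of_nonneg_right (hTle j)
      (Finset.prod_nonneg fun i _ => (hSpos i).le)
  calc ∑ j, ∏ i, (if i = j then T j else sinh (x i) / x i)
      ≤ ∑ j, (x j)^2/2 * ∏ i, sinh (x i) / x i := Finset.sum_le_sum fun j _ => hA j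
    _ = (1/2) * (∑ i, x i ^ 2) * ∏ i, sinh (x i) / x i := by
        rw [← Finset.sum_mul, ← Finset.sum_div]
        ring
end

section
/- For every A ≥ 1, ∫_{0}^{2·arccosh(A)} sinh(x/2) dx = 2(A − 1). Consequently, for t ≥ 2·arccosh(3), the double integral ∫∫ sinh(x/2)·sinh(y/2) dx dy over the region {x, y ≥ 0 : 2·cosh(x/2)·cosh(y/2) + 1 ≤ cosh(t/2)} equals 4·sinh²(t/4)·ln(sinh²(t/4)) − 4·sinh²(t/4) + 4. -/
open Real MeasureTheory

noncomputable def myAcosh (A : ℝ) : ℝ := Real.log (A + Real.sqrt (A^2 - 1))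

lemma myAcosh_nonneg {A : ℝ} (hA : 1 ≤ A) : 0 ≤ myAcosh A :=
  Real.log_nonneg (le_add_of_le_of_nonneg hA (Real.sqrt_nonneg _))

lemma cosh_myAcosh {A : ℝ} (hA : 1 ≤ A) : Real.cosh (myAcosh A) = A := by
  have h0 : 0 ≤ A^2 - 1 := by nlinarith
  have hsn : 0 ≤ Real.sqrt (A^2-1) := Real.sqrt_nonneg _
  have hz : (0:ℝ) < A + Real.sqrt (A^2-1) := by linarith
  rw [myAcosh, Real.cosh_log hz]
  have hs : Real.sqrt (A^2-1) ^ 2 = A^2 - 1 := Real.sq_sqrt h0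
  have hinv : (A + Real.sqrt (A^2-1))⁻¹ = A - Real.sqrt (A^2-1) := by
    apply inv_eq_of_mul_eq_one_right
    nlinarith
  rw [hinv]; ring

lemma part1 (A u : ℝ) (hA : 1 ≤ A) (hu : 0 ≤ u) (hcu : Real.cosh u = A) :
    ∫ x in (0:ℝ)..(2*u), Real.sinh (x/2) = 2*(A-1) := by
  have h : ∀ x ∈ Set.uIcc (0:ℝ) (2*u),
      HasDerivAt (fun x => 2 * Real.cosh (x/2)) (Real.sinh (x/2)) x := by
    intro x _
    have h1 : HasDerivAt (fun x : ℝ => x/2) (1/2) x := (hasDerivAt_id x).div_const 2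
    have h2 : HasDerivAt (fun x => 2 * Real.cosh (x/2)) (2 * (Real.sinh (x/2) * (1/2))) x := by
      have := ((Real.hasDerivAt_cosh (x/2)).comp x h1).const_mul 2; exact this
    convert h2 using 1
    ring
  rw [intervalIntegral.integral_eq_sub_of_hasDerivAt h
    ((Real.continuous_sinh.comp (continuous_id.div_const 2)).intervalIntegrable _ _)]
  rw [show (2*u:ℝ)/2 = u by ring, hcu, show (0:ℝ)/2 = 0 by norm_num, Real.cosh_zero]
  ring

lemma slice_eq {A : ℝ} (hA : 1 ≤ A) :
    {y : ℝ | 0 ≤ y ∧ Real.cosh (y/2) ≤ A} = Set.Icc 0 (2 * myAcosh A) := by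
  ext y
  simp only [Set.mem_setOf_eq, Set.mem_Icc]
  constructor
  · rintro ⟨hy, hc⟩
    refine ⟨hy, ?_⟩
    have h1 : Real.cosh (y/2) ≤ Real.cosh (myAcosh A) := by rw [cosh_myAcosh hA]; exact hc
    have h2 := Real.cosh_le_cosh.mp h1
    rw [abs_of_nonneg (by linarith : (0:ℝ) ≤ y/2), abs_of_nonneg (myAcosh_nonneg hA)] at h2
    linarith
  · rintro ⟨hy, hc⟩
    refine ⟨hy, ?_⟩
    rw [← cosh_myAcosh hA]
    apply Real.cosh_le_cosh.mpr
    rw [abs_of_nonneg (by linarith : (0:ℝ) ≤ y/2), abs_of_nonneg (myAcosh_nonneg hA)]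
    linarith

lemma outer_integral {B : ℝ} (hB : 1 ≤ B) :
    ∫ x in (0:ℝ)..(2 * myAcosh B), Real.sinh (x/2) * (2*(B / Real.cosh (x/2) - 1))
      = 4*B*Real.log B - 4*B + 4 := by
  have hder : ∀ x ∈ Set.uIcc (0:ℝ) (2*myAcosh B),
      HasDerivAt (fun x => 4*B*Real.log (Real.cosh (x/2)) - 4 * Real.cosh (x/2))
        (Real.sinh (x/2) * (2*(B / Real.cosh (x/2) - 1))) x := by
    intro x _
    have hc : (0:ℝ) < Real.cosh (x/2) := Real.cosh_pos (x/2)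
    have h1 : HasDerivAt (fun x : ℝ => x/2) (1/2) x := (hasDerivAt_id x).div_const 2
    have h2 : HasDerivAt (fun x : ℝ => Real.cosh (x/2)) (Real.sinh (x/2) * (1/2)) x :=
      by have := (Real.hasDerivAt_cosh (x/2)).comp x h1; exact this
    have h3 : HasDerivAt (fun x : ℝ => Real.log (Real.cosh (x/2)))
        ((Real.cosh (x/2))⁻¹ * (Real.sinh (x/2) * (1/2))) x :=
      by have := (Real.hasDerivAt_log hc.ne').comp x h2; exact this
    have h4 : HasDerivAt (fun x => 4*B*Real.log (Real.cosh (x/2)) - 4 * Real.cosh (x/2))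
        (4 * B * ((Real.cosh (x / 2))⁻¹ * (Real.sinh (x / 2) * (1 / 2))) - 4 * (Real.sinh (x / 2) * (1 / 2))) x := by
      have := (h3.const_mul (4*B)).sub (h2.const_mul 4); exact this
    convert h4 using 1
    field_simp
    ring
  have hcont : Continuous fun x : ℝ => Real.sinh (x/2) * (2*(B / Real.cosh (x/2) - 1)) := by
    apply Continuous.mul (Real.continuous_sinh.comp (continuous_id.div_const 2))
    apply Continuous.mul continuous_const
    apply Continuous.sub _ continuous_const
    exact continuous_const.div (Real.continuous_cosh.comp (continuous_id.div_const 2))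
      (fun x => (Real.cosh_pos _).ne')
  rw [intervalIntegral.integral_eq_sub_of_hasDerivAt hder (hcont.intervalIntegrable _ _)]
  rw [show (2*myAcosh B:ℝ)/2 = myAcosh B by ring, cosh_myAcosh hB,
    show (0:ℝ)/2 = 0 by norm_num, Real.cosh_zero, Real.log_one]
  ring

/-- (1) For `A ≥ 1`, `∫_0^{2 arccosh A} sinh(x/2) dx = 2(A-1)` (with `u = arccosh A`
characterized by `u ≥ 0`, `cosh u = A`). (2) Consequently, for `t ≥ 2 arccosh 3`
(i.e. `t ≥ 0` with `cosh(t/2) ≥ 3`), the double integral of `sinh(x/2)sinh(y/2)` over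
`{x, y ≥ 0 : 2cosh(x/2)cosh(y/2) + 1 ≤ cosh(t/2)}` equals
`4 sinh²(t/4) ln(sinh²(t/4)) - 4 sinh²(t/4) + 4`. -/
theorem figure_eight_region_integral :
    (∀ A u : ℝ, 1 ≤ A → 0 ≤ u → cosh u = A →
      ∫ x in (0:ℝ)..(2*u), sinh (x/2) = 2*(A-1)) ∧
    (∀ t : ℝ, 0 ≤ t → 3 ≤ cosh (t/2) →
      ∫ p in {p : ℝ × ℝ | 0 ≤ p.1 ∧ 0 ≤ p.2 ∧
            2 * cosh (p.1/2) * cosh (p.2/2) + 1 ≤ cosh (t/2)},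
          sinh (p.1/2) * sinh (p.2/2) =
        4 * sinh (t/4)^2 * Real.log (sinh (t/4)^2) - 4 * sinh (t/4)^2 + 4) := by
  constructor
  · exact part1
  · intro t ht h3
    set C := Real.cosh (t/2) with hCdef
    set B := Real.sinh (t/4)^2 with hBdef
    have hCB : C = 2*B + 1 := by
      rw [hCdef, hBdef, show t/2 = 2*(t/4) by ring, Real.cosh_two_mul, Real.cosh_sq]; ring
    have hB : (1:ℝ) ≤ B := by
      rw [hCB] at h3; linarith
    set S : Set (ℝ × ℝ) := {p : ℝ × ℝ | 0 ≤ p.1 ∧ 0 ≤ p.2 ∧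
      2 * Real.cosh (p.1/2) * Real.cosh (p.2/2) + 1 ≤ C} with hSdef
    set f : ℝ × ℝ → ℝ := fun p => Real.sinh (p.1/2) * Real.sinh (p.2/2) with hfdef
    have hScl : IsClosed S := by
      have heq : S = {p : ℝ×ℝ | 0 ≤ p.1} ∩ {p : ℝ×ℝ | 0 ≤ p.2} ∩
          {p : ℝ×ℝ | 2*Real.cosh (p.1/2)*Real.cosh (p.2/2) + 1 ≤ C} := by
        ext p; simp [hSdef, Set.mem_setOf_eq, and_assoc]
      rw [heq]
      refine IsClosed.inter (IsClosed.inter ?_ ?_) ?_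
      · exact isClosed_le continuous_const continuous_fst
      · exact isClosed_le continuous_const continuous_snd
      · apply isClosed_le _ continuous_const
        exact ((continuous_const.mul (Real.continuous_cosh.comp (continuous_fst.div_const 2))).mul
          (Real.continuous_cosh.comp (continuous_snd.div_const 2))).add continuous_const
    have hSsub : S ⊆ Set.Icc 0 t ×ˢ Set.Icc 0 t := by
      rintro ⟨x, y⟩ ⟨hx, hy, hxy⟩
      have hcy : (1:ℝ) ≤ Real.cosh (y/2) := Real.one_le_cosh _
      have hcx : (1:ℝ) ≤ Real.cosh (x/2) := Real.one_le_cosh _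
      have h3' : (3:ℝ) ≤ C := h3
      have hxle : Real.cosh (x/2) ≤ Real.cosh (t/2) := by
        rw [← hCdef]; nlinarith
      have hyle : Real.cosh (y/2) ≤ Real.cosh (t/2) := by
        rw [← hCdef]; nlinarith
      have hx2 := Real.cosh_le_cosh.mp hxle
      have hy2 := Real.cosh_le_cosh.mp hyle
      rw [abs_of_nonneg (by linarith : (0:ℝ) ≤ x/2), abs_of_nonneg (by linarith : (0:ℝ) ≤ t/2)] at hx2
      rw [abs_of_nonneg (by linarith : (0:ℝ) ≤ y/2), abs_of_nonneg (by linarith : (0:ℝ) ≤ t/2)] at hy2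
      exact ⟨⟨hx, by linarith⟩, ⟨hy, by linarith⟩⟩
    have hScomp : IsCompact S :=
      (isCompact_Icc.prod isCompact_Icc).of_isClosed_subset hScl hSsub
    have hSm : MeasurableSet S := hScl.measurableSet
    have hfc : Continuous f := (Real.continuous_sinh.comp (continuous_fst.div_const 2)).mul
      (Real.continuous_sinh.comp (continuous_snd.div_const 2))
    have hInt : IntegrableOn f S := hfc.continuousOn.integrableOn_compact hScomp
    have key : ∫ p in S, f p = ∫ x : ℝ, ∫ y : ℝ, S.indicator f (x, y) := by
      rw [← integral_indicator hSm]
      rw [show (volume : Measure (ℝ×ℝ)) = (volume : Measure ℝ).prod volume from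
        Measure.volume_eq_prod ℝ ℝ]
      exact integral_prod _ ((integrable_indicator_iff hSm).2
        (by rw [← Measure.volume_eq_prod]; exact hInt))
    have inner_eval : ∀ x : ℝ, (∫ y : ℝ, S.indicator f (x, y)) =
        (Set.Icc (0:ℝ) (2 * myAcosh B)).indicator
          (fun x => Real.sinh (x/2) * (2*(B / Real.cosh (x/2) - 1))) x := by
      intro x
      by_cases hx : x ∈ Set.Icc (0:ℝ) (2 * myAcosh B)
      · have hmem : x ∈ {y : ℝ | 0 ≤ y ∧ Real.cosh (y/2) ≤ B} := by
          rw [slice_eq hB]; exact hx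
        obtain ⟨hx0, hxB⟩ := hmem
        have hcx : (0:ℝ) < Real.cosh (x/2) := Real.cosh_pos (x/2)
        have hA' : (1:ℝ) ≤ B / Real.cosh (x/2) := (one_le_div hcx).2 hxB
        have hslice : (fun y => S.indicator f (x, y)) =
            (Set.Icc (0:ℝ) (2*myAcosh (B / Real.cosh (x/2)))).indicator
              (fun y => Real.sinh (x/2) * Real.sinh (y/2)) := by
          funext y
          rw [← slice_eq hA']
          by_cases hy : 0 ≤ y ∧ Real.cosh (y/2) ≤ B / Real.cosh (x/2)
          · have hmemS : (x, y) ∈ S := by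
              refine ⟨hx0, hy.1, ?_⟩
              have h2 := (le_div_iff₀ hcx).1 hy.2
              rw [hCB]; nlinarith
            rw [Set.indicator_of_mem hmemS, Set.indicator_of_mem
              (show y ∈ {y : ℝ | 0 ≤ y ∧ Real.cosh (y/2) ≤ B / Real.cosh (x/2)} from hy)]
          · have hns : (x, y) ∉ S := by
              intro hmemS
              obtain ⟨_, hy0, hle⟩ := hmemS
              apply hy
              refine ⟨hy0, (le_div_iff₀ hcx).2 ?_⟩
              rw [hCB] at hle; nlinarith
            rw [Set.indicator_of_notMem hns, Set.indicator_of_notMem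
              (show y ∉ {y : ℝ | 0 ≤ y ∧ Real.cosh (y/2) ≤ B / Real.cosh (x/2)} from hy)]
        rw [hslice, integral_indicator measurableSet_Icc, Set.indicator_of_mem hx,
          MeasureTheory.integral_Icc_eq_integral_Ioc,
          ← intervalIntegral.integral_of_le
            (by linarith [myAcosh_nonneg hA'] : (0:ℝ) ≤ 2*myAcosh (B / Real.cosh (x/2))),
          intervalIntegral.integral_const_mul,
          part1 (B / Real.cosh (x/2)) (myAcosh (B / Real.cosh (x/2))) hA'
            (myAcosh_nonneg hA') (cosh_myAcosh hA')]
      · rw [Set.indicator_of_notMem hx]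
        have hnone : ∀ y : ℝ, S.indicator f (x, y) = 0 := by
          intro y
          apply Set.indicator_of_notMem
          intro hmemS
          apply hx
          rw [← slice_eq hB]
          obtain ⟨hx0, hy0, hle⟩ := hmemS
          refine ⟨hx0, ?_⟩
          have hcy : (1:ℝ) ≤ Real.cosh (y/2) := Real.one_le_cosh _
          have hcx : (0:ℝ) < Real.cosh (x/2) := Real.cosh_pos (x/2)
          rw [hCB] at hle; nlinarith
        simp [hnone]
    rw [key]
    simp_rw [inner_eval]
    rw [integral_indicator measurableSet_Icc, MeasureTheory.integral_Icc_eq_integral_Ioc,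
      ← intervalIntegral.integral_of_le (by linarith [myAcosh_nonneg hB] : (0:ℝ) ≤ 2 * myAcosh B),
      outer_integral hB]
end
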